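/- arXiv:2512.16035 — 2 statements merged into one kernel-verified Lean document; each statement's English description precedes it below -/
import Mathlib

section
/- Let B be a non-unital C*-algebra and let τ : B → ℂ be a continuous linear functional with ‖τ‖ ≤ 1 that is positive, i.e. 0 ≤ τ(b* b) for all b ∈ B. Then the canonical extension τ∼ : Unitization ℂ B → ℂ, τ∼(x) = fst x + τ(snd x), is positive on the unitization: 0 ≤ τ∼(x* x) for all x ∈ Unitization ℂ B. -/
open scoped ComplexOrder

open Filter Topology

/-- The canonical extension of a positive contractive linear functional on a non-unital
C*-algebra `B` to the unitization `Unitization ℂ B` is positive. -/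
theorem zeta_stmt_8 (B : Type*) [NonUnitalCStarAlgebra B]
    (τ : B →L[ℂ] ℂ) (hnorm : ‖τ‖ ≤ 1) (hpos : ∀ b : B, 0 ≤ τ (star b * b)) :
    ∀ x : Unitization ℂ B, 0 ≤ (star x * x).fst + τ ((star x * x).snd) := by
  -- set up the spectral order on the unitization and pull it back to `B`
  letI : PartialOrder (Unitization ℂ B) := CStarAlgebra.spectralOrder _
  haveI : StarOrderedRing (Unitization ℂ B) := CStarAlgebra.spectralOrderedRing _
  letI : PartialOrder B :=
    PartialOrder.lift (fun b : B => (b : Unitization ℂ B)) Unitization.inr_injective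
  have hle : ∀ a b : B, a ≤ b ↔ (a : Unitization ℂ B) ≤ (b : Unitization ℂ B) :=
    fun _ _ => Iff.rfl
  haveI : StarOrderedRing B := by
    refine StarOrderedRing.of_nonneg_iff' (fun {a b} hab z => ?_) (fun a => ?_)
    · rw [hle] at hab ⊢
      rw [Unitization.inr_add, Unitization.inr_add]
      exact add_le_add le_rfl hab
    · constructor
      · intro ha
        rw [hle] at ha
        rw [Unitization.inr_zero] at ha
        have hsa' : IsSelfAdjoint (a : Unitization ℂ B) := .of_nonneg ha
        have hsa : IsSelfAdjoint a := hsa'.of_inr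
        have hsr : SpectrumRestricts (a : Unitization ℂ B) ContinuousMap.realToNNReal :=
          (nonneg_iff_isSelfAdjoint_and_quasispectrumRestricts.mp ha).2
        have hq : QuasispectrumRestricts a ContinuousMap.realToNNReal := by
          rw [QuasispectrumRestricts.nnreal_iff]
          intro r hr
          rw [Unitization.quasispectrum_eq_spectrum_inr' ℝ ℂ] at hr
          exact (SpectrumRestricts.nnreal_iff.mp hsr) r hr
        obtain ⟨s, hs, -, hss⟩ :=
          CFC.exists_sqrt_of_isSelfAdjoint_of_quasispectrumRestricts hsa hq
        exact ⟨s, by rw [hs.star_eq]; exact hss.symm⟩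
      · rintro ⟨s, rfl⟩
        rw [hle, Unitization.inr_zero]
        rw [Unitization.inr_mul, Unitization.inr_star]
        exact star_mul_self_nonneg _
  intro x
  set c : ℂ := x.fst with hc
  set b : B := x.snd with hb
  have hfst : (star x * x).fst = star c * c := by simp; rfl
  have hsnd : (star x * x).snd = star c • b + c • star b + star b * b := by
    simp [Unitization.snd_mul]; rfl
  rw [hfst, hsnd, map_add, map_add, map_smul, map_smul, smul_eq_mul, smul_eq_mul]
  set l : Filter B := CStarAlgebra.approximateUnit B with hldef
  have hl := CStarAlgebra.increasingApproximateUnit (A := B)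
  rw [← hldef] at hl
  haveI : l.NeBot := hl.neBot
  set h : B → ℂ := fun e =>
    τ (star (c • e + b) * (c • e + b)) + (star c * c) * (1 - τ (star e * e)) with hh
  have hkey : h = fun e =>
      star c * c + (star c * τ (star e * b) + c * τ (star b * e)) + τ (star b * b) := by
    funext e
    have : star (c • e + b) * (c • e + b) =
        (star c * c) • (star e * e) + ((star c • (star e * b) + c • (star b * e))
          + star b * b) := by
      simp only [star_add, star_smul, add_mul, mul_add, smul_mul_assoc, mul_smul_comm,
        smul_smul, smul_add]
      module
    rw [hh]
    simp only [this, map_add, map_smul, smul_eq_mul]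
    ring
  -- `h` tends to the goal quantity
  have h1 : Tendsto (fun e : B => star e * b) l (𝓝 b) := by
    refine (hl.tendsto_mul_right b).congr' ?_
    filter_upwards [hl.eventually_star_eq] with e he
    rw [he]
  have h2 : Tendsto (fun e : B => star b * e) l (𝓝 (star b)) :=
    hl.tendsto_mul_left (star b)
  have htend : Tendsto h l
      (𝓝 (star c * c + (star c * τ b + c * τ (star b)) + τ (star b * b))) := by
    have t1 : Tendsto (fun e : B => τ (star e * b)) l (𝓝 (τ b)) :=
      (τ.continuous.tendsto b).comp h1
    have t2 : Tendsto (fun e : B => τ (star b * e)) l (𝓝 (τ (star b))) :=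
      (τ.continuous.tendsto (star b)).comp h2
    rw [hkey]
    exact (tendsto_const_nhds.add ((t1.const_mul _).add (t2.const_mul _))).add
      tendsto_const_nhds
  -- `h` is eventually nonnegative
  have hnonneg : ∀ᶠ e in l, 0 ≤ h e := by
    filter_upwards [hl.eventually_norm] with e he
    have hA : 0 ≤ τ (star (c • e + b) * (c • e + b)) := hpos _
    have hB : 0 ≤ (star c * c) * (1 - τ (star e * e)) := by
      refine mul_nonneg (star_mul_self_nonneg c) ?_
      rw [sub_nonneg]
      have hre : 0 ≤ τ (star e * e) := hpos e
      rw [Complex.eq_coe_norm_of_nonneg hre]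
      have hb2 : ‖star e * e‖ ≤ 1 := by
        rw [CStarRing.norm_star_mul_self]
        exact mul_le_one₀ he (norm_nonneg _) he
      have hb1 : ‖τ (star e * e)‖ ≤ 1 := by
        calc ‖τ (star e * e)‖ ≤ ‖τ‖ * ‖star e * e‖ := τ.le_opNorm _
          _ ≤ 1 * 1 := mul_le_mul hnorm hb2 (norm_nonneg _) zero_le_one
          _ = 1 := one_mul 1
      exact_mod_cast hb1
    exact add_nonneg hA hB
  have hfinal := ge_of_tendsto htend hnonneg
  convert hfinal using 1
  ring
end

section
/- Let B be a non-unital C*-algebra and let τ : B → ℂ be a continuous linear functional with ‖τ‖ ≤ 1 that is positive, i.e. 0 ≤ τ(b* b) for all b ∈ B. Then the canonical extension τ∼ : Unitization ℂ B → ℂ, τ∼(x) = fst x + τ(snd x), is contractive with respect to the C*-norm on the unitization: ‖τ∼(x)‖ ≤ ‖x‖ for all x ∈ Unitization ℂ B. -/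
open scoped ComplexOrder
open Filter Topology

section aux
variable {R : Type*} [NonUnitalRing R] [StarRing R] [Module ℂ R]
    [IsScalarTower ℂ R R] [SMulCommClass ℂ R R] [StarModule ℂ R]

lemma aux_conj_symm (ψ : R →ₗ[ℂ] ℂ) (h : ∀ r, 0 ≤ ψ (star r * r)) (x y : R) :
    (starRingEnd ℂ) (ψ (star y * x)) = ψ (star x * y) := by
  have him : ∀ r : R, (ψ (star r * r)).im = 0 := fun r ↦ by
    simpa using ((Complex.le_def.mp (h r)).2).symm
  have e1 : ψ (star (x + y) * (x + y)) =
      ψ (star x * x) + ψ (star y * y) + (ψ (star x * y) + ψ (star y * x)) := by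
    simp only [star_add, add_mul, mul_add, map_add]
    ring
  have e2 : ψ (star (x + Complex.I • y) * (x + Complex.I • y)) =
      ψ (star x * x) + ψ (star y * y) +
        (Complex.I * ψ (star x * y) - Complex.I * ψ (star y * x)) := by
    simp only [star_add, star_smul, Complex.star_def, Complex.conj_I, add_mul, mul_add,
      smul_mul_assoc, mul_smul_comm, map_add, map_smul, smul_smul, smul_eq_mul,
      neg_mul, Complex.I_mul_I, neg_neg, one_mul, map_neg, neg_smul]
    ring_nf
    simp only [Complex.I_sq]
    ring
  have h1 := him (x + y)
  have h2 := him (x + Complex.I • y)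
  rw [e1] at h1
  rw [e2] at h2
  have hx := him x
  have hy := him y
  set s := ψ (star x * y)
  set t := ψ (star y * x)
  apply Complex.ext
  · simp only [Complex.add_im, Complex.sub_im, Complex.mul_im, Complex.I_re, Complex.I_im,
      hx, hy] at h1 h2
    simp only [Complex.conj_re]
    linarith
  · simp only [Complex.add_im, Complex.sub_im, Complex.mul_im, Complex.I_re, Complex.I_im,
      hx, hy] at h1 h2
    simp only [Complex.conj_im]
    linarith

noncomputable def auxCore (ψ : R →ₗ[ℂ] ℂ) (h : ∀ r, 0 ≤ ψ (star r * r)) :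
    PreInnerProductSpace.Core ℂ R where
  inner x y := ψ (star x * y)
  conj_inner_symm x y := aux_conj_symm ψ h x y
  re_inner_nonneg x := by simpa using (Complex.le_def.mp (h x)).1
  add_left x y z := by simp only [star_add, add_mul, map_add]
  smul_left x y r := by
    simp only [star_smul, Complex.star_def, smul_mul_assoc, map_smul, smul_eq_mul]

lemma aux_cs (ψ : R →ₗ[ℂ] ℂ) (h : ∀ r, 0 ≤ ψ (star r * r)) (x y : R) :
    ‖ψ (star x * y)‖ ^ 2 ≤ (ψ (star x * x)).re * (ψ (star y * y)).re := by
  letI c := auxCore ψ h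
  have H := InnerProductSpace.Core.inner_mul_inner_self_le (𝕜 := ℂ) (F := R) x y
  have key : ‖ψ (star x * y)‖ * ‖ψ (star y * x)‖ ≤ (ψ (star x * x)).re * (ψ (star y * y)).re := by
    exact H
  have h2 : ‖ψ (star y * x)‖ = ‖ψ (star x * y)‖ := by
    rw [← aux_conj_symm ψ h x y]; exact (RCLike.norm_conj _).symm
  rw [sq]
  calc ‖ψ (star x * y)‖ * ‖ψ (star x * y)‖ = ‖ψ (star x * y)‖ * ‖ψ (star y * x)‖ := by rw [h2]
    _ ≤ _ := key
end aux


section key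
variable {B : Type*} [NonUnitalCStarAlgebra B]

set_option maxHeartbeats 1000000 in
lemma aux_key (τ : B →L[ℂ] ℂ) (hnorm : ‖τ‖ ≤ 1) (hpos : ∀ b : B, 0 ≤ τ (star b * b)) (b : B) :
    τ (star b) = (starRingEnd ℂ) (τ b) ∧ ‖τ b‖ ^ 2 ≤ (τ (star b * b)).re := by
  set c : B := b * star b with hc_def
  have hc : IsSelfAdjoint c := IsSelfAdjoint.mul_star_self b
  have hσ : ∀ t ∈ quasispectrum ℝ c, (0:ℝ) ≤ t := by
    intro t ht
    rw [hc_def, Unitization.quasispectrum_eq_spectrum_inr' ℝ ℂ, Unitization.inr_mul,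
      Unitization.inr_star] at ht
    have := spectrum_star_mul_self_nonneg (A := Unitization ℂ B) (b := star (b : Unitization ℂ B))
    rw [star_star] at this
    exact this t ht
  set f : ℕ → ℝ → ℝ := fun n t => (n+1)*t / (1 + (n+1)*t) with hf_def
  have hf0 : ∀ n, f n 0 = 0 := fun n => by simp [hf_def]
  have hfc : ∀ n, ContinuousOn (f n) (quasispectrum ℝ c) := by
    intro n
    apply ContinuousOn.div (by fun_prop) (by fun_prop)
    intro t ht
    have := hσ t ht
    positivity
  set e : ℕ → B := fun n => cfcₙ (f n) c with he_def
  have hsa : ∀ n, IsSelfAdjoint (e n) := fun n => cfcₙ_predicate (f n) c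
  have hnorme : ∀ n, ‖e n‖ ≤ 1 := by
    intro n
    refine norm_cfcₙ_le fun t ht => ?_
    have h0 := hσ t ht
    rw [hf_def]
    simp only
    rw [Real.norm_eq_abs, abs_div, abs_of_nonneg (by positivity), abs_of_nonneg (by positivity),
      div_le_one (by positivity)]
    linarith
  -- continuity facts
  have hid : ContinuousOn (fun t : ℝ => t) (quasispectrum ℝ c) := continuousOn_id
  have hcont2 : ∀ n, ContinuousOn (fun t => f n t * t) (quasispectrum ℝ c) :=
    fun n => (hfc n).mul hid
  have hcont1 : ∀ n, ContinuousOn (fun t => f n t * t * f n t) (quasispectrum ℝ c) :=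
    fun n => (hcont2 n).mul (hfc n)
  have hcont3 : ∀ n, ContinuousOn (fun t => t * f n t - t) (quasispectrum ℝ c) :=
    fun n => (hid.mul (hfc n)).sub hid
  -- the product identity
  have hec : ∀ n, e n * c = cfcₙ (fun t => f n t * t) c := by
    intro n
    calc e n * c = cfcₙ (f n) c * cfcₙ (id : ℝ → ℝ) c := by rw [cfcₙ_id ℝ c hc]
      _ = cfcₙ (fun t => f n t * id t) c := (cfcₙ_mul (f n) id c (hfc n) (hf0 n) hid rfl).symm
      _ = cfcₙ (fun t => f n t * t) c := by simp only [id_eq]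
  have hce : ∀ n, c * e n = cfcₙ (fun t => t * f n t) c := by
    intro n
    calc c * e n = cfcₙ (id : ℝ → ℝ) c * cfcₙ (f n) c := by rw [cfcₙ_id ℝ c hc]
      _ = cfcₙ (fun t => id t * f n t) c := (cfcₙ_mul id (f n) c hid rfl (hfc n) (hf0 n)).symm
      _ = cfcₙ (fun t => t * f n t) c := by simp only [id_eq]
  have hece : ∀ n, e n * c * e n = cfcₙ (fun t => f n t * t * f n t) c := by
    intro n
    rw [hec n]
    exact (cfcₙ_mul (fun t => f n t * t) (f n) c (hcont2 n) (by simp [hf0]) (hfc n) (hf0 n)).symm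
  have hprod : ∀ n, (e n * b - b) * star (e n * b - b) =
      cfcₙ (fun t => f n t * t * f n t - f n t * t - (t * f n t - t)) c := by
    intro n
    have hstar : star (e n * b - b) = star b * e n - star b := by
      rw [star_sub, star_mul, (hsa n).star_eq]
    rw [hstar]
    have expand : (e n * b - b) * (star b * e n - star b) =
        e n * c * e n - e n * c - (c * e n - c) := by
      rw [hc_def]
      noncomm_ring
    rw [expand, hece n, hec n, hce n]
    rw [cfcₙ_sub (fun t => f n t * t * f n t - f n t * t) (fun t => t * f n t - t) c
        ((hcont1 n).sub (hcont2 n)) (by simp [hf0]) (hcont3 n) (by simp [hf0]),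
      cfcₙ_sub (fun t => f n t * t * f n t) (fun t => f n t * t) c
        (hcont1 n) (by simp [hf0]) (hcont2 n) (by simp [hf0]),
      cfcₙ_sub (fun t => t * f n t) (fun t : ℝ => t) c
        (hid.mul (hfc n)) (by simp [hf0]) hid rfl, cfcₙ_id' ℝ c hc]
  -- norm bound for the remainder
  have hgb : ∀ n, ‖(e n * b - b) * star (e n * b - b)‖ ≤ 1/((n:ℝ)+1) := by
    intro n
    rw [hprod n]
    refine norm_cfcₙ_le fun t ht => ?_
    have h0 := hσ t ht
    have hd : (0:ℝ) < 1 + ((n:ℝ)+1)*t := by positivity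
    have hft : f n t = ((n:ℝ)+1)*t / (1 + ((n:ℝ)+1)*t) := rfl
    rw [hft]
    have hval : ((n:ℝ)+1)*t / (1 + ((n:ℝ)+1)*t) * t * (((n:ℝ)+1)*t / (1 + ((n:ℝ)+1)*t))
        - ((n:ℝ)+1)*t / (1 + ((n:ℝ)+1)*t) * t
        - (t * (((n:ℝ)+1)*t / (1 + ((n:ℝ)+1)*t)) - t) = t / (1 + ((n:ℝ)+1)*t)^2 := by
      field_simp
      ring
    rw [hval, Real.norm_eq_abs, abs_of_nonneg (by positivity),
      div_le_div_iff₀ (by positivity) (by positivity)]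
    nlinarith [sq_nonneg (((n:ℝ)+1)*t)]
  have hb2 : ∀ n, ‖e n * b - b‖^2 ≤ 1/((n:ℝ)+1) := by
    intro n
    calc ‖e n * b - b‖^2 = ‖(e n * b - b) * star (e n * b - b)‖ := by
          rw [CStarRing.norm_self_mul_star, sq]
      _ ≤ 1/((n:ℝ)+1) := hgb n
  have htend : Tendsto (fun n => e n * b) atTop (𝓝 b) := by
    rw [tendsto_iff_norm_sub_tendsto_zero]
    refine squeeze_zero (g := fun n : ℕ => Real.sqrt (1/((n:ℝ)+1))) (fun n => norm_nonneg _) (fun n => ?_) ?_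
    · exact (Real.le_sqrt (norm_nonneg _) (by positivity)).mpr (hb2 n)
    · simpa using tendsto_one_div_add_atTop_nhds_zero_nat.sqrt
  have htb : Tendsto (fun n => τ (e n * b)) atTop (𝓝 (τ b)) :=
    (τ.continuous.tendsto b).comp htend
  set ψ : B →ₗ[ℂ] ℂ := τ.toLinearMap with hψ_def
  have hψpos : ∀ r : B, 0 ≤ ψ (star r * r) := hpos
  have hnth : ∀ n, τ (star b * e n) = (starRingEnd ℂ) (τ (e n * b)) := by
    intro n
    have h := aux_conj_symm ψ hψpos b (e n)
    rw [(hsa n).star_eq] at h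
    exact h.symm
  constructor
  · have h1 : Tendsto (fun n => (starRingEnd ℂ) (τ (e n * b))) atTop
        (𝓝 ((starRingEnd ℂ) (τ b))) := (Complex.continuous_conj.tendsto _).comp htb
    have h3 : (fun n => (starRingEnd ℂ) (τ (e n * b))) = fun n => τ (star (e n * b)) :=
      funext fun n => by rw [star_mul, (hsa n).star_eq, ← hnth n]
    have h2 : Tendsto (fun n => (starRingEnd ℂ) (τ (e n * b))) atTop (𝓝 (τ (star b))) := by
      rw [h3]
      exact (τ.continuous.tendsto _).comp ((continuous_star.tendsto b).comp htend)
    exact tendsto_nhds_unique h2 h1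
  · have hcsn : ∀ n, ‖τ (e n * b)‖^2 ≤ (τ (star b * b)).re := by
      intro n
      have h := aux_cs ψ hψpos (e n) b
      rw [(hsa n).star_eq] at h
      have h2 : ‖e n * e n‖ ≤ 1 := by
        calc ‖e n * e n‖ ≤ ‖e n‖ * ‖e n‖ := norm_mul_le _ _
          _ ≤ 1 := by nlinarith [hnorme n, norm_nonneg (e n)]
      have h3 : ‖τ (e n * e n)‖ ≤ 1 := by
        calc ‖τ (e n * e n)‖ ≤ ‖τ‖ * ‖e n * e n‖ := τ.le_opNorm _
          _ ≤ 1 := by nlinarith [norm_nonneg (e n * e n), (norm_nonneg τ)]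
      have hee : (τ (e n * e n)).re ≤ 1 := by
        calc (τ (e n * e n)).re ≤ ‖τ (e n * e n)‖ := by
              exact Complex.re_le_norm _
          _ ≤ 1 := h3
      have hbb : 0 ≤ (τ (star b * b)).re := by simpa using (Complex.le_def.mp (hpos b)).1
      have h' : ‖τ (e n * b)‖^2 ≤ (τ (e n * e n)).re * (τ (star b * b)).re := h
      nlinarith [h', hee, hbb]
    exact le_of_tendsto (htb.norm.pow 2) (Filter.Eventually.of_forall hcsn)
end key

set_option maxHeartbeats 1000000 in
/-- The canonical extension of a positive contractive linear functional on a non-unital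
C*-algebra `B` to the unitization `Unitization ℂ B` is contractive with respect to the
C*-norm on the unitization. -/
theorem zeta_stmt_9 (B : Type*) [NonUnitalCStarAlgebra B]
    (τ : B →L[ℂ] ℂ) (hnorm : ‖τ‖ ≤ 1) (hpos : ∀ b : B, 0 ≤ τ (star b * b)) :
    ∀ x : Unitization ℂ B, ‖x.fst + τ x.snd‖ ≤ ‖x‖ := by
  intro x
  letI : PartialOrder (Unitization ℂ B) := CStarAlgebra.spectralOrder _
  letI : StarOrderedRing (Unitization ℂ B) := CStarAlgebra.spectralOrderedRing _
  set Φ : Unitization ℂ B →ₗ[ℂ] ℂ :=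
    (Unitization.fstHom ℂ B).toLinearMap + τ.toLinearMap ∘ₗ Unitization.sndHom ℂ ℂ B with hΦ_def
  have hΦ_apply : ∀ z : Unitization ℂ B, Φ z = z.fst + τ z.snd := fun z => rfl
  have hΦpos : ∀ z : Unitization ℂ B, 0 ≤ Φ (star z * z) := by
    intro z
    obtain ⟨hsym, hcs⟩ := aux_key τ hnorm hpos z.snd
    rw [hΦ_apply, Unitization.fst_mul, Unitization.snd_mul, Unitization.fst_star,
      Unitization.snd_star]
    simp only [map_add, map_smul, smul_eq_mul]
    rw [hsym]
    have hq := hpos z.snd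
    have hqim : (τ (star z.snd * z.snd)).im = 0 := by
      simpa using ((Complex.le_def.mp hq).2).symm
    have hqre : (z.snd |> τ).re ^ 2 + (τ z.snd).im ^ 2 ≤ (τ (star z.snd * z.snd)).re := by
      have := hcs
      rwa [Complex.sq_norm, Complex.normSq_apply, ← sq, ← sq] at this
    rw [Complex.le_def]
    constructor
    · simp only [Complex.zero_re, Complex.add_re, Complex.mul_re, Complex.conj_re,
        Complex.conj_im, Complex.zero_im, RCLike.star_def]
      nlinarith [sq_nonneg (z.fst.re + (τ z.snd).re), sq_nonneg (z.fst.im + (τ z.snd).im), hqre]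
    · simp only [Complex.zero_im, Complex.add_im, Complex.mul_im, Complex.conj_re,
        Complex.conj_im, RCLike.star_def, hqim]
      ring
  have hΦ1 : Φ 1 = 1 := by
    rw [hΦ_apply]
    simp
  have hΦnn : ∀ p ∈ AddSubmonoid.closure (Set.range fun s : Unitization ℂ B => star s * s),
      0 ≤ Φ p := by
    intro p hp
    induction hp using AddSubmonoid.closure_induction with
    | mem s hs =>
      obtain ⟨w, rfl⟩ := hs
      exact hΦpos w
    | zero => simp
    | add a b _ _ ha hb =>
      rw [map_add]
      exact add_nonneg ha hb
  have hsax : IsSelfAdjoint (star x * x) := IsSelfAdjoint.star_mul_self x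
  have hle := IsSelfAdjoint.le_algebraMap_norm_self (a := star x * x) hsax
  obtain ⟨p, hp, hEq⟩ := (StarOrderedRing.le_iff _ _).mp hle
  have h0 := hΦnn p hp
  have halg : Φ (algebraMap ℝ (Unitization ℂ B) ‖star x * x‖) = (‖star x * x‖ : ℂ) := by
    rw [Algebra.algebraMap_eq_smul_one, ← IsScalarTower.algebraMap_smul ℂ ‖star x * x‖
      (1 : Unitization ℂ B), map_smul, hΦ1]
    simp
  have hsum : (‖star x * x‖ : ℂ) = Φ (star x * x) + Φ p := by
    rw [← map_add, ← hEq, halg]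
  have hpre : 0 ≤ (Φ p).re := by simpa using (Complex.le_def.mp h0).1
  have hmono : (Φ (star x * x)).re ≤ ‖x‖ ^ 2 := by
    have := congrArg Complex.re hsum
    simp only [Complex.ofReal_re, Complex.add_re] at this
    have hnx : ‖star x * x‖ = ‖x‖ ^ 2 := by rw [CStarRing.norm_star_mul_self, sq]
    rw [hnx] at this
    linarith
  have hcs := aux_cs Φ hΦpos 1 x
  rw [star_one, one_mul, one_mul, hΦ1] at hcs
  simp only [Complex.one_re, one_mul] at hcs
  have hfinal : ‖Φ x‖ ^ 2 ≤ ‖x‖ ^ 2 := le_trans hcs hmono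
  have := hΦ_apply x
  rw [← this]
  nlinarith [norm_nonneg (Φ x), norm_nonneg x, hfinal]
end
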